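/- arXiv:2311.08170 — 2 statements merged into one kernel-verified Lean document; each statement's English description precedes it below -/
import Mathlib

section
/- Let u_1, ..., u_n be integers with gcd(u_1, ..., u_n) = 1 and u_n ≠ 0, and suppose u_1 ≠ 0. Then there exists t ∈ ℤ such that the nonzero integers among u_1 + t·u_n, u_2, ..., u_{n−1} are coprime (their gcd is 1). -/
lemma exists_shear_aux (a b c : ℤ) (hb : b ≠ 0)
    (h1 : ∀ p : ℕ, p.Prime → (p : ℤ) ∣ a → (p : ℤ) ∣ b → (p : ℤ) ∣ c → False) :
    ∃ t : ℤ, ∀ p : ℕ, p.Prime → (p : ℤ) ∣ a + t * c → (p : ℤ) ∣ b → False := by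
  refine ⟨∏ p ∈ b.natAbs.primeFactors.filter fun p : ℕ => ¬(p : ℤ) ∣ a, (p : ℤ), ?_⟩
  intro p hp hpd hpb
  set t : ℤ := ∏ p ∈ b.natAbs.primeFactors.filter fun p : ℕ => ¬(p : ℤ) ∣ a, (p : ℤ) with ht
  have hpZ : Prime (p : ℤ) := Int.prime_iff_natAbs_prime.mpr (by simpa using hp)
  by_cases hpa : (p : ℤ) ∣ a
  · have htc : (p : ℤ) ∣ t * c := by
      have := dvd_sub hpd hpa
      simpa using this
    rcases hpZ.dvd_mul.mp htc with h | h
    · rcases (hpZ.dvd_finset_prod_iff _).mp h with ⟨q, hq, hdq⟩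
      simp only [Finset.mem_filter, Nat.mem_primeFactors] at hq
      have : p = q := by
        have := Int.natCast_dvd_natCast.mp hdq
        exact ((Nat.prime_dvd_prime_iff_eq hp hq.1.1).mp this)
      exact hq.2 (this ▸ hpa)
    · exact h1 p hp hpa hpb h
  · have hmem : p ∈ b.natAbs.primeFactors.filter fun p : ℕ => ¬(p : ℤ) ∣ a := by
      simp only [Finset.mem_filter, Nat.mem_primeFactors]
      refine ⟨⟨hp, ?_, by simpa using hb⟩, hpa⟩
      have := Int.natAbs_dvd_natAbs.mpr hpb
      simpa using this
    have hpt : (p : ℤ) ∣ t := Finset.dvd_prod_of_mem _ hmem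
    exact hpa (by simpa using dvd_sub hpd (hpt.mul_right c))

theorem coprime_after_shear {n : ℕ} (hn : 3 ≤ n) (u : Fin n → ℤ)
    (hgcd : Finset.gcd Finset.univ u = 1)
    (hlast : u ⟨n - 1, by omega⟩ ≠ 0)
    (hfirst : u ⟨0, by omega⟩ ≠ 0)
    (hmid : ∃ i : Fin n, 0 < (i : ℕ) ∧ (i : ℕ) < n - 1 ∧ u i ≠ 0) :
    ∃ t : ℤ,
      Finset.gcd (Finset.univ.filter fun i : Fin n => (i : ℕ) < n - 1)
        (Function.update u ⟨0, by omega⟩ (u ⟨0, by omega⟩ + t * u ⟨n - 1, by omega⟩)) = 1 := by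
  set Z : Fin n := ⟨0, by omega⟩ with hZ
  set N1 : Fin n := ⟨n - 1, by omega⟩ with hN1
  set mids : Finset (Fin n) := Finset.univ.filter fun i : Fin n => 0 < (i : ℕ) ∧ (i : ℕ) < n - 1
    with hmids
  set a : ℤ := u Z
  set c : ℤ := u N1
  set b : ℤ := mids.gcd u with hb_def
  obtain ⟨i₀, hi₀1, hi₀2, hi₀3⟩ := hmid
  have hi₀mem : i₀ ∈ mids := by simp [hmids, hi₀1, hi₀2]
  have hb : b ≠ 0 := fun h => hi₀3 (Finset.gcd_eq_zero_iff.mp h i₀ hi₀mem)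
  have h1 : ∀ p : ℕ, p.Prime → (p : ℤ) ∣ a → (p : ℤ) ∣ b → (p : ℤ) ∣ c → False := by
    intro p hp hpa hpb hpc
    have hall : ∀ j : Fin n, (p : ℤ) ∣ u j := by
      intro j
      rcases lt_trichotomy (j : ℕ) (n - 1) with h | h | h
      · rcases Nat.eq_zero_or_pos (j : ℕ) with h0 | h0
        · have : j = Z := Fin.ext h0
          rwa [this]
        · exact hpb.trans (Finset.gcd_dvd (by simp [hmids, h0, h]))
      · have : j = N1 := Fin.ext h
        rwa [this]
      · exact absurd j.isLt (by omega)
    have : (p : ℤ) ∣ 1 := hgcd ▸ Finset.dvd_gcd fun j _ => hall j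
    exact (Int.prime_iff_natAbs_prime.mpr (by simpa using hp)).not_dvd_one this
  obtain ⟨t, ht⟩ := exists_shear_aux a b c hb h1
  refine ⟨t, ?_⟩
  set v : Fin n → ℤ := Function.update u Z (a + t * c) with hv
  set S : Finset (Fin n) := Finset.univ.filter fun i : Fin n => (i : ℕ) < n - 1 with hS
  have hZS : Z ∈ S := by simp [hS, hZ]; omega
  have hvZ : v Z = a + t * c := Function.update_self _ _ _
  have hmidv : ∀ i ∈ mids, v i = u i := by
    intro i hi
    simp only [hmids, Finset.mem_filter] at hi
    have : i ≠ Z := by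
      intro h
      rw [h] at hi
      simp [hZ] at hi
    exact Function.update_of_ne this _ _
  have hgb : S.gcd v ∣ b := by
    refine Finset.dvd_gcd fun i hi => ?_
    have hiS : i ∈ S := by
      simp only [hmids, Finset.mem_filter] at hi
      simp [hS, hi.2.2]
    rw [← hmidv i hi]
    exact Finset.gcd_dvd hiS
  have hunit : IsUnit (S.gcd v) := by
    by_contra hns
    have hg0 : S.gcd v ≠ 0 := by
      intro h
      have := Finset.gcd_eq_zero_iff.mp h i₀ (by simp [hS, hi₀2])
      rw [hmidv i₀ hi₀mem] at this
      exact hi₀3 this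
    obtain ⟨q, hq, hqd⟩ := Int.exists_prime_and_dvd
      (fun h => hns (Int.isUnit_iff_natAbs_eq.mpr h))
    have hqn : q.natAbs.Prime := Int.prime_iff_natAbs_prime.mp hq
    have hqd' : (q.natAbs : ℤ) ∣ S.gcd v := (Int.natAbs_dvd).mpr hqd
    refine ht q.natAbs hqn ?_ (hqd'.trans hgb)
    have := hqd'.trans (Finset.gcd_dvd hZS)
    rwa [hvZ] at this
  calc S.gcd v = normalize (S.gcd v) := (Finset.normalize_gcd).symm
    _ = 1 := normalize_eq_one.mpr hunit
end

section
/- If B ∈ GL_n(ℝ) is Siegel-reduced, then its orthogonality defect satisfies δ(B) ≤ 2^{n(n−1)/4}. -/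
noncomputable def colVec {n : ℕ} (B : Matrix (Fin n) (Fin n) ℝ) (j : Fin n) :
    EuclideanSpace ℝ (Fin n) := WithLp.toLp 2 (fun i => B i j)

noncomputable def orthDefect {n : ℕ} (B : Matrix (Fin n) (Fin n) ℝ) : ℝ :=
  (∏ j, ‖colVec B j‖) / |B.det|

/-- Gram–Schmidt orthogonalization of the columns of `B`. -/
noncomputable def gs {n : ℕ} (B : Matrix (Fin n) (Fin n) ℝ) (i : Fin n) :
    EuclideanSpace ℝ (Fin n) :=
  haveI : WellFoundedLT (Fin n) := inferInstance
  InnerProductSpace.gramSchmidt ℝ (colVec B) i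

/-- The Gram–Schmidt coefficients μ_{i,j}. -/
noncomputable def mu {n : ℕ} (B : Matrix (Fin n) (Fin n) ℝ) (i j : Fin n) : ℝ :=
  (inner ℝ (gs B j) (colVec B i) : ℝ) / ‖gs B j‖ ^ 2

lemma gs_orth {n : ℕ} (B : Matrix (Fin n) (Fin n) ℝ) {i j : Fin n} (h : i ≠ j) :
    (inner ℝ (gs B i) (gs B j) : ℝ) = 0 :=
  haveI : WellFoundedLT (Fin n) := inferInstance
  InnerProductSpace.gramSchmidt_orthogonal ℝ (colVec B) h

lemma col_eq_sum {n : ℕ} (B : Matrix (Fin n) (Fin n) ℝ) (i : Fin n) :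
    colVec B i = gs B i + ∑ j ∈ Finset.Iio i, mu B i j • gs B j := by
  haveI : WellFoundedLT (Fin n) := inferInstance
  have h := InnerProductSpace.gramSchmidt_def'' ℝ (colVec B) i
  simpa [mu, gs] using h

lemma norm_sum_sq {n : ℕ} (B : Matrix (Fin n) (Fin n) ℝ) (s : Finset (Fin n))
    (c : Fin n → ℝ) :
    ‖∑ j ∈ s, c j • gs B j‖ ^ 2 = ∑ j ∈ s, (c j) ^ 2 * ‖gs B j‖ ^ 2 := by
  rw [← real_inner_self_eq_norm_sq]
  rw [sum_inner]
  refine Finset.sum_congr rfl fun j hj => ?_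
  rw [inner_sum, Finset.sum_eq_single_of_mem j hj]
  · rw [real_inner_smul_left, real_inner_smul_right, real_inner_self_eq_norm_sq]
    ring
  · intro k hk hkj
    rw [real_inner_smul_left, real_inner_smul_right, gs_orth B (Ne.symm hkj)]
    ring

lemma norm_col_sq {n : ℕ} (B : Matrix (Fin n) (Fin n) ℝ) (i : Fin n) :
    ‖colVec B i‖ ^ 2 = ‖gs B i‖ ^ 2 + ∑ j ∈ Finset.Iio i, (mu B i j) ^ 2 * ‖gs B j‖ ^ 2 := by
  have hrep : colVec B i =
      ∑ j ∈ insert i (Finset.Iio i), (if j = i then (1:ℝ) else mu B i j) • gs B j := by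
    rw [Finset.sum_insert (by simp), if_pos rfl, one_smul, col_eq_sum B i]
    congr 1
    refine Finset.sum_congr rfl fun j hj => ?_
    rw [if_neg (Finset.mem_Iio.mp hj).ne]
  rw [hrep, norm_sum_sq, Finset.sum_insert (by simp), if_pos rfl, one_pow, one_mul]
  congr 1
  refine Finset.sum_congr rfl fun j hj => ?_
  rw [if_neg (Finset.mem_Iio.mp hj).ne]

noncomputable def Gmat {n : ℕ} (B : Matrix (Fin n) (Fin n) ℝ) : Matrix (Fin n) (Fin n) ℝ :=
  Matrix.of fun i j => gs B j i

noncomputable def Rmat {n : ℕ} (B : Matrix (Fin n) (Fin n) ℝ) : Matrix (Fin n) (Fin n) ℝ :=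
  Matrix.of fun j i => if j = i then 1 else if j < i then mu B i j else 0

lemma B_factor {n : ℕ} (B : Matrix (Fin n) (Fin n) ℝ) : B = Gmat B * Rmat B := by
  ext k i
  have hrep : colVec B i = ∑ j : Fin n, Rmat B j i • gs B j := by
    rw [col_eq_sum B i]
    rw [← Finset.sum_subset (Finset.subset_univ (insert i (Finset.Iio i)))
      (fun j _ hj => ?_)]
    · rw [Finset.sum_insert (by simp)]
      congr 1
      · simp [Rmat]
      · refine Finset.sum_congr rfl fun j hj => ?_
        have h := Finset.mem_Iio.mp hj
        simp [Rmat, h.ne, h]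
    · have h1 : j ≠ i := fun h => hj (by simp [h])
      have h2 : ¬ j < i := fun h => hj (Finset.mem_insert_of_mem (Finset.mem_Iio.mpr h))
      simp [Rmat, h1, h2]
  have := congrFun (congrArg WithLp.ofLp hrep) k
  simp only [Matrix.mul_apply, Gmat, Matrix.of_apply]
  have hB : B k i = colVec B i k := rfl
  rw [hB, this]
  rw [show (∑ j : Fin n, Rmat B j i • gs B j) k = ∑ j : Fin n, (Rmat B j i • gs B j) k
      from by rw [WithLp.ofLp_sum, Finset.sum_apply]]
  exact Finset.sum_congr rfl fun j _ => mul_comm _ _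

lemma det_Rmat {n : ℕ} (B : Matrix (Fin n) (Fin n) ℝ) : (Rmat B).det = 1 := by
  rw [Matrix.det_of_upperTriangular]
  · simp [Rmat]
  · intro i j h
    simp only [Rmat, Matrix.of_apply]
    have h2 : j < i := h
    rw [if_neg (fun he : i = j => h2.ne (he.symm)), if_neg (fun hl : i < j => h2.asymm hl)]

lemma inner_gs_eq_sum {n : ℕ} (B : Matrix (Fin n) (Fin n) ℝ) (i j : Fin n) :
    (inner ℝ (gs B i) (gs B j) : ℝ) = ∑ k, gs B i k * gs B j k := by
  simp [PiLp.inner_apply, RCLike.inner_apply, conj_trivial, mul_comm]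

lemma GtG {n : ℕ} (B : Matrix (Fin n) (Fin n) ℝ) :
    (Gmat B).transpose * Gmat B = Matrix.diagonal (fun i => ‖gs B i‖ ^ 2) := by
  ext i j
  rw [Matrix.mul_apply]
  by_cases h : i = j
  · subst h
    simp only [Matrix.transpose_apply, Gmat, Matrix.of_apply, Matrix.diagonal_apply_eq]
    rw [← real_inner_self_eq_norm_sq, inner_gs_eq_sum]
  · rw [Matrix.diagonal_apply_ne _ h]
    have := gs_orth B h
    rw [inner_gs_eq_sum] at this
    simpa [Gmat] using this

lemma abs_det_eq_prod {n : ℕ} (B : Matrix (Fin n) (Fin n) ℝ) :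
    |B.det| = ∏ i, ‖gs B i‖ := by
  have h1 : B.det = (Gmat B).det := by
    conv_lhs => rw [B_factor B]
    rw [Matrix.det_mul, det_Rmat, mul_one]
  have h2 : (Gmat B).det ^ 2 = ∏ i, ‖gs B i‖ ^ 2 := by
    have := congrArg Matrix.det (GtG B)
    rwa [Matrix.det_mul, Matrix.det_transpose, ← sq, Matrix.det_diagonal] at this
  have h3 : ∏ i, ‖gs B i‖ ^ 2 = (∏ i, ‖gs B i‖) ^ 2 := by rw [Finset.prod_pow]
  rw [h1, ← Real.sqrt_sq_eq_abs, h2, h3, Real.sqrt_sq (by positivity)]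

lemma gs_pos {n : ℕ} (B : Matrix (Fin n) (Fin n) ℝ) (hB : IsUnit B.det) (i : Fin n) :
    0 < ‖gs B i‖ := by
  rcases eq_or_lt_of_le (norm_nonneg (gs B i)) with h | h
  · exfalso
    have hd : |B.det| = 0 := by
      rw [abs_det_eq_prod]
      exact Finset.prod_eq_zero (Finset.mem_univ i) h.symm
    exact hB.ne_zero (abs_eq_zero.mp hd)
  · exact h

lemma chain {n : ℕ} (B : Matrix (Fin n) (Fin n) ℝ) (hB : IsUnit B.det)
    (hsize : ∀ i j : Fin n, j < i → |mu B i j| ≤ 1 / 2)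
    (hlovasz : ∀ i j : Fin n, (j : ℕ) + 1 = (i : ℕ) →
      ‖gs B i‖ ^ 2 / ‖gs B j‖ ^ 2 ≥ 3 / 4 - (mu B i j) ^ 2) :
    ∀ (d : ℕ) (i j : Fin n), (j : ℕ) + d = (i : ℕ) →
      ‖gs B j‖ ^ 2 ≤ 2 ^ d * ‖gs B i‖ ^ 2 := by
  intro d
  induction d with
  | zero =>
    intro i j h
    have : j = i := Fin.ext (by omega)
    subst this; simp
  | succ d ih =>
    intro i j h
    have hk : (j : ℕ) + 1 < n := by have := i.isLt; omega
    set k : Fin n := ⟨(j : ℕ) + 1, hk⟩ with hkdef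
    have h1 : ‖gs B j‖ ^ 2 ≤ 2 * ‖gs B k‖ ^ 2 := by
      have hl := hlovasz k j rfl
      have hs := hsize k j (by simp [hkdef, Fin.lt_def])
      have hmu : (mu B k j) ^ 2 ≤ 1 / 4 := by
        have := abs_le.mp hs
        nlinarith [sq_abs (mu B k j)]
      have hgj : 0 < ‖gs B j‖ ^ 2 := pow_pos (gs_pos B hB j) 2
      rw [ge_iff_le, le_div_iff₀ hgj] at hl
      nlinarith
    have h2 := ih i k (by simp [hkdef]; omega)
    calc ‖gs B j‖ ^ 2 ≤ 2 * ‖gs B k‖ ^ 2 := h1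
      _ ≤ 2 * (2 ^ d * ‖gs B i‖ ^ 2) := by nlinarith
      _ = 2 ^ (d + 1) * ‖gs B i‖ ^ 2 := by ring

lemma geom_Iio {n : ℕ} (i : Fin n) :
    ∑ j ∈ Finset.Iio i, (2:ℝ) ^ ((i:ℕ) - (j:ℕ)) = 2 * (2 ^ (i:ℕ) - 1) := by
  have h1 : ∑ j ∈ Finset.Iio i, (2:ℝ) ^ ((i:ℕ) - (j:ℕ))
      = ∑ m ∈ Finset.range (i:ℕ), (2:ℝ) ^ ((i:ℕ) - m) := by
    refine Finset.sum_bij' (fun j _ => (j : ℕ))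
      (fun m hm => ⟨m, lt_trans (Finset.mem_range.mp hm) i.isLt⟩) ?_ ?_ ?_ ?_ ?_
    · intro a ha
      simpa only [Finset.mem_range, ← Fin.lt_def] using Finset.mem_Iio.mp ha
    · intro a ha
      simp only [Finset.mem_Iio, Fin.lt_def]
      exact Finset.mem_range.mp ha
    · intro a ha; rfl
    · intro a ha; rfl
    · intro a ha; rfl
  rw [h1, ← Finset.sum_range_reflect]
  have h2 : ∀ m ∈ Finset.range (i:ℕ), (2:ℝ) ^ ((i:ℕ) - ((i:ℕ) - 1 - m)) = 2 * 2 ^ m := by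
    intro m hm
    have hm' := Finset.mem_range.mp hm
    have : (i:ℕ) - ((i:ℕ) - 1 - m) = m + 1 := by omega
    rw [this, pow_succ]
    ring
  rw [Finset.sum_congr rfl h2, ← Finset.mul_sum, geom_sum_eq (by norm_num : (2:ℝ) ≠ 1)]
  norm_num

lemma col_bound {n : ℕ} (B : Matrix (Fin n) (Fin n) ℝ) (hB : IsUnit B.det)
    (hsize : ∀ i j : Fin n, j < i → |mu B i j| ≤ 1 / 2)
    (hlovasz : ∀ i j : Fin n, (j : ℕ) + 1 = (i : ℕ) →
      ‖gs B i‖ ^ 2 / ‖gs B j‖ ^ 2 ≥ 3 / 4 - (mu B i j) ^ 2) (i : Fin n) :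
    ‖colVec B i‖ ^ 2 ≤ 2 ^ (i : ℕ) * ‖gs B i‖ ^ 2 := by
  rw [norm_col_sq]
  have hterm : ∀ j ∈ Finset.Iio i, (mu B i j) ^ 2 * ‖gs B j‖ ^ 2
      ≤ (1 / 4 * 2 ^ ((i:ℕ) - (j:ℕ))) * ‖gs B i‖ ^ 2 := by
    intro j hj
    have hj' := Finset.mem_Iio.mp hj
    have hmu : (mu B i j) ^ 2 ≤ 1 / 4 := by
      have := abs_le.mp (hsize i j hj')
      nlinarith [sq_abs (mu B i j)]
    have hch := chain B hB hsize hlovasz ((i:ℕ) - (j:ℕ)) i j (by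
      have := Fin.lt_def.mp hj'; omega)
    have h0 : (0:ℝ) ≤ ‖gs B j‖ ^ 2 := by positivity
    nlinarith [pow_pos (gs_pos B hB i) 2, pow_nonneg (le_of_lt (gs_pos B hB i)) 2,
      sq_nonneg (mu B i j)]
  have hsum := Finset.sum_le_sum hterm
  have hg : ∑ j ∈ Finset.Iio i, (1 / 4 * (2:ℝ) ^ ((i:ℕ) - (j:ℕ))) * ‖gs B i‖ ^ 2
      = (1 / 4 * (2 * (2 ^ (i:ℕ) - 1))) * ‖gs B i‖ ^ 2 := by
    rw [← Finset.sum_mul, ← Finset.mul_sum, geom_Iio]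
  have h1 : (1:ℝ) ≤ 2 ^ (i:ℕ) := one_le_pow₀ (by norm_num)
  have hgi : (0:ℝ) ≤ ‖gs B i‖ ^ 2 := by positivity
  rw [hg] at hsum
  nlinarith

lemma sqrt_two_pow (m : ℕ) : Real.sqrt ((2:ℝ) ^ m) = (2:ℝ) ^ ((m:ℝ)/2) := by
  rw [Real.sqrt_eq_rpow, ← Real.rpow_natCast 2 m, ← Real.rpow_mul (by norm_num)]
  ring_nf

lemma sum_fin_id (n : ℕ) : ∑ i : Fin n, ((i:ℕ):ℝ) = (n:ℝ) * ((n:ℝ) - 1) / 2 := by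
  rw [Fin.sum_univ_eq_sum_range (fun m => ((m:ℕ):ℝ)) n]
  have h := Finset.sum_range_id_mul_two n
  have h2 : ((∑ i ∈ Finset.range n, i : ℕ) : ℝ) * 2 = ((n * (n-1) : ℕ) : ℝ) := by
    exact_mod_cast congrArg (Nat.cast : ℕ → ℝ) h
  rw [Nat.cast_sum] at h2
  rcases n with _ | m
  · simp
  · push_cast [Nat.succ_sub_one] at h2 ⊢
    linarith

theorem siegel_reduced_defect_bound {n : ℕ} (B : Matrix (Fin n) (Fin n) ℝ)
    (hB : IsUnit B.det)
    (hsize : ∀ i j : Fin n, j < i → |mu B i j| ≤ 1 / 2)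
    (hlovasz : ∀ i j : Fin n, (j : ℕ) + 1 = (i : ℕ) →
      ‖gs B i‖ ^ 2 / ‖gs B j‖ ^ 2 ≥ 3 / 4 - (mu B i j) ^ 2) :
    orthDefect B ≤ (2 : ℝ) ^ (((n : ℝ) * ((n : ℝ) - 1)) / 4) := by
  have hdet : 0 < |B.det| := abs_pos.mpr hB.ne_zero
  have hcol : ∀ i : Fin n, ‖colVec B i‖ ≤ (2:ℝ) ^ (((i:ℕ):ℝ)/2) * ‖gs B i‖ := by
    intro i
    have h := col_bound B hB hsize hlovasz i
    calc ‖colVec B i‖ = Real.sqrt (‖colVec B i‖ ^ 2) :=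
          (Real.sqrt_sq (norm_nonneg _)).symm
      _ ≤ Real.sqrt (2 ^ (i:ℕ) * ‖gs B i‖ ^ 2) := Real.sqrt_le_sqrt h
      _ = Real.sqrt (2 ^ (i:ℕ)) * Real.sqrt (‖gs B i‖ ^ 2) :=
          Real.sqrt_mul (by positivity) _
      _ = (2:ℝ) ^ (((i:ℕ):ℝ)/2) * ‖gs B i‖ := by
          rw [sqrt_two_pow, Real.sqrt_sq (norm_nonneg _)]
  have hprod : ∏ i, ‖colVec B i‖ ≤ ∏ i : Fin n, ((2:ℝ) ^ (((i:ℕ):ℝ)/2) * ‖gs B i‖) :=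
    Finset.prod_le_prod (fun i _ => norm_nonneg _) (fun i _ => hcol i)
  rw [Finset.prod_mul_distrib] at hprod
  have hexp : ∏ i : Fin n, (2:ℝ) ^ (((i:ℕ):ℝ)/2)
      = (2:ℝ) ^ (((n : ℝ) * ((n : ℝ) - 1)) / 4) := by
    rw [← Real.rpow_sum_of_pos (by norm_num : (0:ℝ) < 2)]
    congr 1
    rw [show (∑ i : Fin n, ((i:ℕ):ℝ)/2) = (∑ i : Fin n, ((i:ℕ):ℝ))/2 by
      rw [Finset.sum_div], sum_fin_id]
    ring
  rw [hexp] at hprod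
  rw [orthDefect, div_le_iff₀ hdet, abs_det_eq_prod]
  exact hprod
end
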